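/- Let k ≥ 5 be an integer and ℓ = ⌊(k-1)/2⌋. Let G be a 2-connected simple graph containing no cycle of length at least k, suppose the (ℓ-1)-disintegration H = H(G,ℓ-1) is non-empty, and let P = x₁x₂⋯x_m be a crossing H-path of G with the maximum number of vertices among all H-paths, where m ≥ k. Let (i,j) be a minimal crossing pair of P, and let s = s_P and t = t_P. If x_s ∈ V(H) and x_{s+1} ∈ N_P(x₁), then there is no index q with j ≤ q ≤ t-2 such that x₁ is adjacent to both x_q and x_{q+1}. Similarly, if x_t ∈ V(H) and x_{t-1} ∈ N_P(x_m), then there is no index q with s+1 ≤ q ≤ i-1 such that x_m is adjacent to both x_q and x_{q+1}. -/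

import Mathlib

open SimpleGraph

variable {V : Type*}

/-- `x 1, …, x m` is a path in `G` (1-indexed): injective on `[1, m]`, with consecutive
vertices adjacent. -/
def IsIndexedPath (G : SimpleGraph V) (x : ℕ → V) (m : ℕ) : Prop :=
  (∀ i j, 1 ≤ i → i ≤ m → 1 ≤ j → j ≤ m → x i = x j → i = j) ∧
  ∀ i, 1 ≤ i → i < m → G.Adj (x i) (x (i + 1))

/-- The vertex set of the indexed path `x 1, …, x m`. -/
def pathVerts (x : ℕ → V) (m : ℕ) : Set V := {v | ∃ i, 1 ≤ i ∧ i ≤ m ∧ x i = v}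

/-- `N_P(v)`: the neighbours of `v` among the vertices of the path. -/
def pathNbrs (G : SimpleGraph V) (x : ℕ → V) (m : ℕ) (v : V) : Set V :=
  {u | u ∈ pathVerts x m ∧ G.Adj v u}

/-- `N_P⁻(x₁)`: immediate predecessors on `P` of the path-neighbours of `x₁`. -/
def predNbrs (G : SimpleGraph V) (x : ℕ → V) (m : ℕ) : Set V :=
  {v | ∃ i, 2 ≤ i ∧ i ≤ m ∧ G.Adj (x 1) (x i) ∧ v = x (i - 1)}

/-- `N_P⁺(x_m)`: immediate successors on `P` of the path-neighbours of `x_m`. -/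
def succNbrs (G : SimpleGraph V) (x : ℕ → V) (m : ℕ) : Set V :=
  {v | ∃ i, 1 ≤ i ∧ i < m ∧ G.Adj (x m) (x i) ∧ v = x (i + 1)}

/-- `G` contains no cycle of length at least `k`, i.e. `c(G) < k`. -/
def NoCycleGE (G : SimpleGraph V) (k : ℕ) : Prop :=
  ∀ (v : V) (w : G.Walk v v), w.IsCycle → w.length < k

/-- `G` contains a cycle of length at least `L`. -/
def HasCycleGE (G : SimpleGraph V) (L : ℕ) : Prop :=
  ∃ (v : V) (w : G.Walk v v), w.IsCycle ∧ L ≤ w.length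

/-- `G` is 2-connected: at least 3 vertices and deleting any single vertex leaves a
connected graph. -/
def TwoConnected (G : SimpleGraph V) [Fintype V] : Prop :=
  3 ≤ Fintype.card V ∧ ∀ v : V, (G.induce {u | u ≠ v}).Connected

/-- The vertex set of the `α`-disintegration `H(G, α)` of `G`: the largest vertex set on
which the induced subgraph has minimum degree at least `α + 1`. -/
noncomputable def disint (G : SimpleGraph V) (α : ℕ) : Set V :=
  ⋃₀ {S : Set V | ∀ v ∈ S, α + 1 ≤ {u | u ∈ S ∧ G.Adj v u}.ncard}

/-- `N_s(G)`: the number of `s`-cliques of `G`. -/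
noncomputable def cliqueCount (G : SimpleGraph V) (s : ℕ) : ℕ :=
  {S : Finset V | G.IsNClique s S}.ncard

/-- `h_s(n, k, a) = C(k - a, s) + (n - k + a) · C(a, s - 1)`. -/
def hval (n k a s : ℕ) : ℕ :=
  Nat.choose (k - a) s + (n - k + a) * Nat.choose a (s - 1)

/-- The graph `H(n, k, a)` on `Fin n`: the first `a` vertices form the set `A`, the next
`k - 2a` vertices form `C`, and the remaining `n - k + a` vertices form `B`; `A ∪ C` is a
clique and every vertex of `A` is joined to every vertex of `B`. -/
def Hgraph (n k a : ℕ) : SimpleGraph (Fin n) :=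
  SimpleGraph.fromRel fun i j =>
    (i.val < a ∧ k - a ≤ j.val) ∨ (i.val < k - a ∧ j.val < k - a)

/-- `G` is isomorphic to a subgraph of `H`. -/
def IsSubgraphOf {W : Type*} (G : SimpleGraph V) (H : SimpleGraph W) : Prop :=
  ∃ f : V → W, Function.Injective f ∧ ∀ a b, G.Adj a b → H.Adj (f a) (f b)

/-- Every connected component of `H` is a star: there is an assignment of a "center" to
each vertex such that every edge joins the common center of its endpoints to a leaf. -/
def IsStarForest (H : SimpleGraph V) : Prop :=
  ∃ f : V → V, ∀ a b, H.Adj a b → (f a = a ∧ f b = a) ∨ (f a = b ∧ f b = b)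

/-- `(i, j)` is a crossing pair of the indexed path `x 1, …, x m`. -/
def CrossPair (G : SimpleGraph V) (x : ℕ → V) (m i j : ℕ) : Prop :=
  1 ≤ i ∧ i < j ∧ j ≤ m ∧ G.Adj (x m) (x i) ∧ G.Adj (x 1) (x j)

/-- `(i, j)` is a minimal crossing pair of the indexed path `x 1, …, x m`. -/
def MinCrossPair (G : SimpleGraph V) (x : ℕ → V) (m i j : ℕ) : Prop :=
  CrossPair G x m i j ∧
    ∀ h, i < h → h < j → ¬G.Adj (x 1) (x h) ∧ ¬G.Adj (x m) (x h)

/-- One application of the successor operation along the path to a set of vertices. -/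
def succStep (x : ℕ → V) (m : ℕ) (S : Set V) : Set V :=
  {v | ∃ i, 1 ≤ i ∧ i < m ∧ x i ∈ S ∧ v = x (i + 1)}

/-- `N_P^{+i}(x_m)`: the `i`-fold iterated successor set of `N_P(x_m)` along the path. -/
def iterNbrSucc (G : SimpleGraph V) (x : ℕ → V) (m i : ℕ) : Set V :=
  (succStep x m)^[i] (pathNbrs G x m (x m))

/-!
Every configuration excluded by the claim closes, together with segments of `P`, a cycle of
length at least `k`, or (after a Pósa rotation) extends to an `H`-path longer than `P`. So if `x₁`
had neighbours `x_q, x_{q+1}` with `q ≥ s + 2`, then all `H`-neighbours of `x_s` and of `x_m` lie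
on `P`, and their positions — those of `x_s` beyond `s` shifted down by one — are pairwise
distinct, lie in `[1, m - 1]`, and avoid the window `[q - (m - k) - 1, q]` of `m - k + 2`
positions. Each of `x_s, x_m` has at least `ℓ` neighbours in `H`, so `2ℓ ≤ k - 3`, contradicting
`ℓ = ⌊(k - 1)/2⌋`. The second statement is the first one for the reversed path.
-/

open Finset

namespace SimpleGraph

theorem Walk.exists_support_eq_map_range {G : SimpleGraph V} (f : ℕ → V) (n : ℕ)
    (hadj : ∀ c < n, G.Adj (f c) (f (c + 1))) :
    ∃ w : G.Walk (f 0) (f n), w.support = (List.range (n + 1)).map f ∧ w.length = n := by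
  induction n with
  | zero => exact ⟨Walk.nil, rfl, rfl⟩
  | succ n ih =>
    obtain ⟨w, hsup, hlen⟩ := ih fun c hc => hadj c (by omega)
    refine ⟨w.concat (hadj n (by omega)), ?_, by rw [Walk.length_concat, hlen]⟩
    rw [Walk.support_concat, hsup, List.range_succ (n := n + 1), List.map_append,
      List.map_singleton]

end SimpleGraph

theorem NoCycleGE.not_hasCycleGE {G : SimpleGraph V} {k L : ℕ} (hcyc : NoCycleGE G k)
    (hkL : k ≤ L) : ¬HasCycleGE G L := by
  rintro ⟨v, w, hw, hL⟩
  have := hcyc v w hw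
  omega

/-- On an indexed path all three alternatives make `y a` and `y b` adjacent; the first two are
settled by arithmetic on positions alone. -/
def PathLinked (G : SimpleGraph V) (y : ℕ → V) (a b : ℕ) : Prop :=
  a + 1 = b ∨ b + 1 = a ∨ G.Adj (y a) (y b)

theorem pathVerts_comp_subset {y : ℕ → V} {m : ℕ} {σ : ℕ → ℕ}
    (hσ : Set.MapsTo σ (Set.Icc 1 m) (Set.Icc 1 m)) :
    pathVerts (fun h => y (σ h)) m ⊆ pathVerts y m := by
  rintro _ ⟨h, h1, hm, rfl⟩
  obtain ⟨h1', hm'⟩ := hσ ⟨h1, hm⟩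
  exact ⟨σ h, h1', hm', rfl⟩

namespace IsIndexedPath

variable {G : SimpleGraph V} {y : ℕ → V} {m : ℕ}

theorem adj_of_pathLinked (hP : IsIndexedPath G y m) {a b : ℕ} (ha : a ∈ Set.Icc 1 m)
    (hb : b ∈ Set.Icc 1 m) (h : PathLinked G y a b) : G.Adj (y a) (y b) := by
  obtain rfl | rfl | h := h
  · exact hP.2 a ha.1 (by grind)
  · exact (hP.2 b hb.1 (by grind)).symm
  · exact h

theorem comp (hP : IsIndexedPath G y m) {σ : ℕ → ℕ}
    (hmaps : Set.MapsTo σ (Set.Icc 1 m) (Set.Icc 1 m)) (hinj : Set.InjOn σ (Set.Icc 1 m))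
    (hstep : ∀ a, 1 ≤ a → a < m → PathLinked G y (σ a) (σ (a + 1))) :
    IsIndexedPath G (fun h => y (σ h)) m := by
  refine ⟨fun a b ha1 ham hb1 hbm hab => hinj ⟨ha1, ham⟩ ⟨hb1, hbm⟩ ?_, fun a ha1 ham => ?_⟩
  · obtain ⟨ha1', ham'⟩ := hmaps ⟨ha1, ham⟩
    obtain ⟨hb1', hbm'⟩ := hmaps ⟨hb1, hbm⟩
    exact hP.1 _ _ ha1' ham' hb1' hbm' hab
  · exact hP.adj_of_pathLinked (hmaps ⟨ha1, ham.le⟩) (hmaps ⟨by omega, ham⟩) (hstep a ha1 ham)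

theorem reverse (hP : IsIndexedPath G y m) : IsIndexedPath G (fun h => y (m + 1 - h)) m :=
  hP.comp (fun a ha => by grind) (fun a ha b hb h => by grind)
    (fun a ha1 ham => Or.inr (Or.inl (by omega)))

/-- Pósa rotation at the chord `y 1 y (s + 1)`: the path `y m, …, y (s + 1), y 1, …, y s`. -/
theorem rotate (hP : IsIndexedPath G y m) {s : ℕ} (hsm : s < m) (h1s : G.Adj (y 1) (y (s + 1))) :
    IsIndexedPath G (fun h => y (if h ≤ m - s then m + 1 - h else h - (m - s))) m :=
  hP.comp (fun a ha => by grind) (fun a ha b hb h => by grind)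
    (fun a ha1 ham => by unfold PathLinked; grind [h1s.symm])

theorem snoc (hP : IsIndexedPath G y m) {u : V} (hu : u ∉ pathVerts y m) (hmu : G.Adj (y m) u) :
    IsIndexedPath G (fun h => if h ≤ m then y h else u) (m + 1) := by
  refine ⟨fun a b ha1 ham hb1 hbm hab => ?_, fun a ha1 ham => ?_⟩
  · dsimp only at hab
    split_ifs at hab with ha hb hb
    · exact hP.1 a b ha1 ha hb1 hb hab
    · exact absurd ⟨a, ha1, ha, hab⟩ hu
    · exact absurd ⟨b, hb1, hb, hab.symm⟩ hu
    · omega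
  · dsimp only
    split_ifs with ha hb <;> try omega
    · exact hP.2 a ha1 (by omega)
    · obtain rfl : a = m := by omega
      exact hmu

theorem hasCycleGE_of_pathLinked (hP : IsIndexedPath G y m) (σ : ℕ → ℕ) {L : ℕ} (hL : 3 ≤ L)
    (hmaps : Set.MapsTo σ (Set.Iio L) (Set.Icc 1 m)) (hinj : Set.InjOn σ (Set.Iio L))
    (hstep : ∀ c, c + 1 < L → PathLinked G y (σ c) (σ (c + 1)))
    (hclose : PathLinked G y (σ (L - 1)) (σ 0)) : HasCycleGE G L := by
  have hmem : ∀ c < L, σ c ∈ Set.Icc 1 m := fun c hc => hmaps hc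
  obtain ⟨w, hsup, hlen⟩ := Walk.exists_support_eq_map_range (G := G) (y ∘ σ) (L - 1)
    fun c hc => hP.adj_of_pathLinked (hmem c (by omega)) (hmem (c + 1) (by omega))
      (hstep c (by omega))
  have hw : w.IsPath := by
    rw [Walk.isPath_def, hsup]
    refine List.nodup_range.map_on fun a ha b hb hab => ?_
    rw [List.mem_range] at ha hb
    obtain ⟨ha1, ham⟩ := hmem a (by omega)
    obtain ⟨hb1, hbm⟩ := hmem b (by omega)
    exact hinj (Set.mem_Iio.2 (by omega)) (Set.mem_Iio.2 (by omega))
      (hP.1 _ _ ha1 ham hb1 hbm hab)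
  have hadj : G.Adj ((y ∘ σ) (L - 1)) ((y ∘ σ) 0) :=
    hP.adj_of_pathLinked (hmem _ (by omega)) (hmem 0 (by omega)) hclose
  refine ⟨_, Walk.cons hadj w, (Walk.cons_isCycle_iff w hadj).2 ⟨hw, fun he => ?_⟩, ?_⟩
  · have := hw.length_eq_one_of_mem_edges (Sym2.eq_swap ▸ he)
    omega
  · rw [Walk.length_cons, hlen]
    omega

/-- The cycle `y 1, …, y p, y m, y (m - 1), …, y q`. -/
theorem hasCycleGE_of_adj_last_of_adj_first (hP : IsIndexedPath G y m) {p q : ℕ} (hp : 1 ≤ p)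
    (hpq : p < q) (hqm : q ≤ m) (hmp : G.Adj (y m) (y p)) (h1q : G.Adj (y 1) (y q))
    (hL : 3 ≤ p + (m - q) + 1) : HasCycleGE G (p + (m - q) + 1) := by
  refine hP.hasCycleGE_of_pathLinked (fun c => if c < p then c + 1 else m + p - c) hL
    (fun c hc => ?_) (fun c hc c' hc' h => ?_) (fun c hc => ?_) ?_ <;>
    simp only [Set.mem_Iio, Set.mem_Icc, PathLinked] at * <;> grind [hmp.symm, h1q.symm]

theorem hasCycleGE_of_adj_last_of_adj_first_succ (hP : IsIndexedPath G y m) (hm : 3 ≤ m)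
    {p : ℕ} (hp : 1 ≤ p) (hpm : p < m) (hmp : G.Adj (y m) (y p))
    (h1p : G.Adj (y 1) (y (p + 1))) : HasCycleGE G m := by
  have := hP.hasCycleGE_of_adj_last_of_adj_first hp p.lt_add_one hpm hmp h1p (by omega)
  rwa [show p + (m - (p + 1)) + 1 = m by omega] at this

/-- The cycle `y s, …, y 1, y p, y (p - 1), …, y (s + 1), y m, y (m - 1), …, y (p + 1)`. -/
theorem hasCycleGE_of_adj_first_of_adj_succ (hP : IsIndexedPath G y m) {s p : ℕ} (hs : 1 ≤ s)
    (hsp : s < p) (hpm : p < m) (hsm : G.Adj (y (s + 1)) (y m)) (h1p : G.Adj (y 1) (y p))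
    (hsp' : G.Adj (y s) (y (p + 1))) : HasCycleGE G m := by
  refine hP.hasCycleGE_of_pathLinked
    (fun c => if c < s then s - c else if c < p then p + s - c else m + p - c) (by omega)
    (fun c hc => ?_) (fun c hc c' hc' h => ?_) (fun c hc => ?_) ?_ <;>
    simp only [Set.mem_Iio, Set.mem_Icc, PathLinked] at * <;> grind [h1p.symm, hsp'.symm]

/-- The cycle `y 1, …, y s, y r, y (r - 1), …, y (s + 1), y m, y (m - 1), …, y (q + 1)`. -/
theorem hasCycleGE_of_adj_of_adj_first_succ (hP : IsIndexedPath G y m) {s r q : ℕ} (hs : 1 ≤ s)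
    (hsr : s + 1 < r) (hrq : r ≤ q) (hqm : q < m) (hsr' : G.Adj (y s) (y r))
    (hsm : G.Adj (y (s + 1)) (y m)) (h1q : G.Adj (y 1) (y (q + 1))) :
    HasCycleGE G (r + (m - q)) := by
  refine hP.hasCycleGE_of_pathLinked
    (fun c => if c < s then c + 1 else if c < r then r + s - c else m + r - c) (by omega)
    (fun c hc => ?_) (fun c hc c' hc' h => ?_) (fun c hc => ?_) ?_ <;>
    simp only [Set.mem_Iio, Set.mem_Icc, PathLinked] at * <;> grind [hsm.symm, h1q.symm]

/-- The cycle `y m, …, y (p + 1), y s, …, y 1, y (s + 1), …, y p`, found as a crossing pair of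
consecutive chords on the rotated path. -/
theorem hasCycleGE_of_adj_last_of_adj_succ (hP : IsIndexedPath G y m) {s p : ℕ} (hs : 1 ≤ s)
    (hsp : s < p) (hpm : p < m) (h1s : G.Adj (y 1) (y (s + 1))) (hmp : G.Adj (y m) (y p))
    (hsp' : G.Adj (y s) (y (p + 1))) : HasCycleGE G m := by
  refine (hP.rotate (by omega) h1s).hasCycleGE_of_adj_last_of_adj_first_succ (p := m - p)
    (by omega) (by omega) (by omega) ?_ ?_ <;> grind [hmp.symm, hsp'.symm]

theorem add_sub_lt_of_adj_last (hP : IsIndexedPath G y m) {k q b : ℕ} (hcyc : NoCycleGE G k)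
    (hkm : k ≤ m) (hqm : q < m) (h1q : G.Adj (y 1) (y q)) (h1q' : G.Adj (y 1) (y (q + 1)))
    (hb : 1 ≤ b) (hbq : b ≤ q) (hmb : G.Adj (y m) (y b)) : b + (m - q) + 1 < k := by
  obtain rfl | hbq := hbq.eq_or_lt
  · have hb1 : b ≠ 1 := fun h => G.irrefl (h ▸ h1q)
    exact absurd (hP.hasCycleGE_of_adj_last_of_adj_first_succ (by omega) hb hqm hmb h1q')
      (hcyc.not_hasCycleGE (by omega))
  · by_contra! hbk
    exact hcyc.not_hasCycleGE hbk (hP.hasCycleGE_of_adj_last_of_adj_first hb hbq hqm.le hmb h1q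
      (by omega))

theorem add_sub_lt_of_adj (hP : IsIndexedPath G y m) {k s q a : ℕ} (hcyc : NoCycleGE G k)
    (hkm : k ≤ m) (hs : 1 ≤ s) (hsm : G.Adj (y (s + 1)) (y m)) (hqm : q < m)
    (h1q : G.Adj (y 1) (y q)) (h1q' : G.Adj (y 1) (y (q + 1))) (hsa : s + 1 < a)
    (haq : a ≤ q + 1) (hsa' : G.Adj (y s) (y a)) : a + (m - q) < k := by
  obtain rfl | haq := haq.eq_or_lt
  · exact absurd (hP.hasCycleGE_of_adj_first_of_adj_succ hs (by omega) hqm hsm h1q hsa')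
      (hcyc.not_hasCycleGE hkm)
  · by_contra! hak
    exact hcyc.not_hasCycleGE hak
      (hP.hasCycleGE_of_adj_of_adj_first_succ hs hsa (by omega) hqm hsa' hsm h1q')

/-- Shifting the positions of the neighbours of `y s` beyond `s` down by one, they become disjoint
from the positions of the neighbours of `y m`, and both avoid the window `[q - (m - k) - 1, q]`. -/
theorem card_adj_add_card_adj_le [DecidableRel G.Adj] (hP : IsIndexedPath G y m) {k s q : ℕ}
    (hcyc : NoCycleGE G k) (hkm : k ≤ m) (h1s : G.Adj (y 1) (y (s + 1)))
    (hsm : G.Adj (y (s + 1)) (y m)) (hsmin : ∀ p ∈ Set.Icc 1 m, G.Adj (y m) (y p) → s < p)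
    (hsq : s + 2 ≤ q) (hqm : q < m) (h1q : G.Adj (y 1) (y q))
    (h1q' : G.Adj (y 1) (y (q + 1))) :
    #{p ∈ Icc 1 m | G.Adj (y s) (y p)} + #{p ∈ Icc 1 m | G.Adj (y m) (y p)} + (m - k + 2) ≤
      m - 1 := by
  have hs : 1 ≤ s := Nat.one_le_iff_ne_zero.2 fun h => G.irrefl (h ▸ h1s)
  have hwindow := hP.add_sub_lt_of_adj_last hcyc hkm hqm h1q h1q' (by omega) (by omega) hsm.symm
  have hno_cross : ∀ p, s < p → p < m → G.Adj (y m) (y p) → ¬G.Adj (y s) (y (p + 1)) :=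
    fun p hsp hpm hmp hsp' =>
      hcyc.not_hasCycleGE hkm (hP.hasCycleGE_of_adj_last_of_adj_succ hs hsp hpm h1s hmp hsp')
  set A := {p ∈ Icc 1 m | G.Adj (y s) (y p)}
  set B := {p ∈ Icc 1 m | G.Adj (y m) (y p)}
  set W := Icc (q - (m - k) - 1) q
  set U := Icc 1 (m - 1)
  set f : ℕ → ℕ := fun a => if a ≤ s then a else a - 1
  have hf : Set.InjOn f A := by
    intro a ha b hb hab
    simp only [A, coe_filter, mem_Icc, Set.mem_ofPred_eq, f] at ha hb hab
    have has : a ≠ s := fun h => G.irrefl (h ▸ ha.2)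
    have hbs : b ≠ s := fun h => G.irrefl (h ▸ hb.2)
    split_ifs at hab <;> omega
  have hAU : A.image f ⊆ U \ W := by
    simp only [subset_iff, mem_image, A, mem_filter, mem_sdiff, U, W, mem_Icc, f]
    rintro _ ⟨a, ⟨⟨ha1, ham⟩, hsa⟩, rfl⟩
    have has : a ≠ s := fun h => G.irrefl (h ▸ hsa)
    split_ifs with has'
    · omega
    have ham' : a ≠ m := by
      rintro rfl
      have hlast := hP.2 (a - 1) (by omega) (by omega)
      rw [Nat.sub_add_cancel (by omega)] at hlast
      exact hno_cross (a - 1) (by omega) (by omega) hlast.symm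
        (by rwa [Nat.sub_add_cancel (by omega)])
    refine ⟨by omega, fun ⟨hlo, hhi⟩ => ?_⟩
    have := hP.add_sub_lt_of_adj hcyc hkm hs hsm hqm h1q h1q' (a := a) (by omega) (by omega) hsa
    omega
  have hBU : B ⊆ U \ W := by
    simp only [subset_iff, B, mem_filter, mem_sdiff, U, W, mem_Icc]
    rintro b ⟨⟨hb1, hbm⟩, hmb⟩
    have hbm' : b ≠ m := fun h => G.irrefl (h ▸ hmb)
    have hsb := hsmin b ⟨hb1, hbm⟩ hmb
    refine ⟨by omega, fun ⟨hlo, hhi⟩ => ?_⟩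
    have := hP.add_sub_lt_of_adj_last hcyc hkm hqm h1q h1q' hb1 hhi hmb
    omega
  have hdisj : Disjoint (A.image f) B := by
    simp only [Finset.disjoint_left, mem_image, A, B, mem_filter, mem_Icc, f]
    rintro _ ⟨a, ⟨⟨ha1, ham⟩, hsa⟩, rfl⟩ ⟨⟨hb1, hbm⟩, hmb⟩
    have hsb := hsmin _ ⟨hb1, hbm⟩ hmb
    split_ifs at hmb hsb hb1 hbm with has
    · omega
    · exact hno_cross (a - 1) hsb (by omega) hmb (by rwa [Nat.sub_add_cancel (by omega)])
  have hcount := card_le_card (union_subset hAU hBU)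
  rw [card_union_of_disjoint hdisj, card_image_of_injOn hf,
    card_sdiff_of_subset (Icc_subset_Icc (by omega) (by omega))] at hcount
  simp only [Nat.card_Icc] at hcount
  omega

end IsIndexedPath

theorem add_one_le_card_adj_of_mem_disint {G : SimpleGraph V} [DecidableRel G.Adj] {α m : ℕ}
    {y : ℕ → V} {v : V} (hv : v ∈ disint G α)
    (hon : ∀ u ∈ disint G α, G.Adj v u → u ∈ pathVerts y m) :
    α + 1 ≤ #{p ∈ Icc 1 m | G.Adj v (y p)} := by
  obtain ⟨S, hS, hvS⟩ := Set.mem_sUnion.1 hv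
  set A := {p ∈ Icc 1 m | G.Adj v (y p)}
  have hsub : {u | u ∈ S ∧ G.Adj v u} ⊆ y '' (A : Set ℕ) := by
    rintro u ⟨huS, hvu⟩
    obtain ⟨p, hp1, hpm, rfl⟩ := hon u (Set.subset_sUnion_of_mem hS huS) hvu
    exact ⟨p, by simp [A, hp1, hpm, hvu], rfl⟩
  calc α + 1 ≤ {u | u ∈ S ∧ G.Adj v u}.ncard := hS v hvS
    _ ≤ (y '' (A : Set ℕ)).ncard := Set.ncard_le_ncard hsub
    _ ≤ (A : Set ℕ).ncard := Set.ncard_image_le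
    _ = #A := Set.ncard_coe_finset A

structure IsLongestHPath (G : SimpleGraph V) (D : Set V) (y : ℕ → V) (m : ℕ) : Prop where
  isIndexedPath : IsIndexedPath G y m
  first_mem : y 1 ∈ D
  last_mem : y m ∈ D
  le_of_isIndexedPath :
    ∀ (z : ℕ → V) (m' : ℕ), IsIndexedPath G z m' → z 1 ∈ D → z m' ∈ D → m' ≤ m

namespace IsLongestHPath

variable {G : SimpleGraph V} {D : Set V} {y : ℕ → V} {m : ℕ}

theorem reverse (hL : IsLongestHPath G D y m) : IsLongestHPath G D (fun h => y (m + 1 - h)) m :=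
  ⟨hL.isIndexedPath.reverse, by simpa using hL.last_mem, by simpa using hL.first_mem,
    hL.le_of_isIndexedPath⟩

theorem rotate (hL : IsLongestHPath G D y m) {s : ℕ} (hs : 1 ≤ s) (hsm : s < m)
    (h1s : G.Adj (y 1) (y (s + 1))) (hys : y s ∈ D) :
    IsLongestHPath G D (fun h => y (if h ≤ m - s then m + 1 - h else h - (m - s))) m := by
  refine ⟨hL.isIndexedPath.rotate hsm h1s, ?_, ?_, hL.le_of_isIndexedPath⟩
  · rw [if_pos (by omega), Nat.add_sub_cancel]
    exact hL.last_mem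
  · rwa [if_neg (by omega), Nat.sub_sub_self hsm.le]

theorem mem_pathVerts_of_adj_last (hL : IsLongestHPath G D y m) {u : V} (hu : u ∈ D)
    (hmu : G.Adj (y m) u) : u ∈ pathVerts y m := by
  by_contra hnot
  have := hL.le_of_isIndexedPath _ _ (hL.isIndexedPath.snoc hnot hmu)
    (by split_ifs; exacts [hL.first_mem, hu]) (by simpa using hu)
  omega

theorem not_adj_first_succ_of_adj_first {α k s q : ℕ} (hL : IsLongestHPath G (disint G α) y m)
    (hcyc : NoCycleGE G k) (hkα : k ≤ 2 * α + 4) (hkm : k ≤ m) (hys : y s ∈ disint G α)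
    (h1s : G.Adj (y 1) (y (s + 1))) (hsm : G.Adj (y (s + 1)) (y m))
    (hsmin : ∀ p ∈ Set.Icc 1 m, G.Adj (y m) (y p) → s < p) (hsq : s + 2 ≤ q) (hqm : q < m)
    (h1q : G.Adj (y 1) (y q)) : ¬G.Adj (y 1) (y (q + 1)) := by
  classical
  intro h1q'
  have hs : 1 ≤ s := Nat.one_le_iff_ne_zero.2 fun h => G.irrefl (h ▸ h1s)
  have hA := add_one_le_card_adj_of_mem_disint hys fun u hu hsu =>
    pathVerts_comp_subset (fun a ha => by grind)
      ((hL.rotate hs (by omega) h1s hys).mem_pathVerts_of_adj_last hu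
        (by rwa [if_neg (by omega), Nat.sub_sub_self (by omega)]))
  have hB := add_one_le_card_adj_of_mem_disint hL.last_mem fun u hu =>
    hL.mem_pathVerts_of_adj_last hu
  have := hL.isIndexedPath.card_adj_add_card_adj_le hcyc hkm h1s hsm hsmin hsq hqm h1q h1q'
  omega

end IsLongestHPath

theorem stmt_6_general (k ℓ : ℕ) (hℓ : ℓ = (k - 1) / 2)
    {V : Type*} (G : SimpleGraph V)
    (hcyc : NoCycleGE G k) (D : Set V) (hD : D = disint G (ℓ - 1))
    (x : ℕ → V) (m : ℕ) (hP : IsIndexedPath G x m) (hx1 : x 1 ∈ D) (hxm : x m ∈ D)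
    (hmax : ∀ (y : ℕ → V) (m' : ℕ), IsIndexedPath G y m' → y 1 ∈ D → y m' ∈ D → m' ≤ m)
    (hmk : k ≤ m) (i j : ℕ) (hij : MinCrossPair G x m i j)
    (s t : ℕ)
    (hs2 : G.Adj (x (s + 1)) (x m))
    (hsmin : ∀ h, h + 1 ≤ m → G.Adj (x (h + 1)) (x m) → s ≤ h)
    (ht2 : t ≤ m + 1) (ht3 : G.Adj (x (t - 1)) (x 1))
    (htmax : ∀ h, 2 ≤ h → h ≤ m + 1 → G.Adj (x (h - 1)) (x 1) → h ≤ t) :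
    ((x s ∈ D ∧ G.Adj (x 1) (x (s + 1))) →
      ∀ q, j ≤ q → q ≤ t - 2 → ¬(G.Adj (x 1) (x q) ∧ G.Adj (x 1) (x (q + 1)))) ∧
    ((x t ∈ D ∧ G.Adj (x m) (x (t - 1))) →
      ∀ q, s + 1 ≤ q → q ≤ i - 1 → ¬(G.Adj (x m) (x q) ∧ G.Adj (x m) (x (q + 1)))) := by
  subst hD
  have hL : IsLongestHPath G (disint G (ℓ - 1)) x m := ⟨hP, hx1, hxm, hmax⟩
  have hkα : k ≤ 2 * (ℓ - 1) + 4 := by omega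
  obtain ⟨⟨hi1, hlt, hjm, hmi, h1j⟩, -⟩ := hij
  have hsi : s < i := by have := hsmin (i - 1) (by omega) (by grind [hmi.symm]); omega
  have hjt : j < t := by have := htmax (j + 1) (by omega) (by omega) (by grind [h1j.symm]); omega
  constructor
  · rintro ⟨hsD, h1s⟩ q hjq hqt ⟨h1q, h1q'⟩
    refine hL.not_adj_first_succ_of_adj_first hcyc hkα hmk hsD h1s hs2 (fun p ⟨hp1, hpm⟩ hmp => ?_)
      (by omega) (by omega) h1q h1q'
    have := hsmin (p - 1) (by omega) (by grind [hmp.symm])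
    omega
  · rintro ⟨htD, hmt⟩ q hsq hqi ⟨hmq, hmq'⟩
    refine hL.reverse.not_adj_first_succ_of_adj_first (s := m + 1 - t) (q := m - q) hcyc hkα hmk
      (by grind) (by grind) (by grind) (fun p ⟨hp1, hpm⟩ h1p => ?_) (by omega) (by omega)
      (by grind) (by grind)
    have := htmax (m + 2 - p) (by omega) (by omega) (by grind [h1p.symm])
    omega

/-- No two consecutive neighbours (Claim 3.4). -/
theorem stmt_6 (k ℓ : ℕ) (hk : 5 ≤ k) (hℓ : ℓ = (k - 1) / 2)
    {V : Type*} [Fintype V] (G : SimpleGraph V) (h2c : TwoConnected G)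
    (hcyc : NoCycleGE G k) (D : Set V) (hD : D = disint G (ℓ - 1)) (hne : D.Nonempty)
    (x : ℕ → V) (m : ℕ) (hP : IsIndexedPath G x m) (hx1 : x 1 ∈ D) (hxm : x m ∈ D)
    (hmax : ∀ (y : ℕ → V) (m' : ℕ), IsIndexedPath G y m' → y 1 ∈ D → y m' ∈ D → m' ≤ m)
    (hmk : k ≤ m) (i j : ℕ) (hij : MinCrossPair G x m i j)
    (s t : ℕ)
    (hs1 : s + 1 ≤ m) (hs2 : G.Adj (x (s + 1)) (x m))
    (hsmin : ∀ h, h + 1 ≤ m → G.Adj (x (h + 1)) (x m) → s ≤ h)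
    (ht1 : 2 ≤ t) (ht2 : t ≤ m + 1) (ht3 : G.Adj (x (t - 1)) (x 1))
    (htmax : ∀ h, 2 ≤ h → h ≤ m + 1 → G.Adj (x (h - 1)) (x 1) → h ≤ t) :
    ((x s ∈ D ∧ G.Adj (x 1) (x (s + 1))) →
      ∀ q, j ≤ q → q ≤ t - 2 → ¬(G.Adj (x 1) (x q) ∧ G.Adj (x 1) (x (q + 1)))) ∧
    ((x t ∈ D ∧ G.Adj (x m) (x (t - 1))) →
      ∀ q, s + 1 ≤ q → q ≤ i - 1 → ¬(G.Adj (x m) (x q) ∧ G.Adj (x m) (x (q + 1)))) :=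
  stmt_6_general k ℓ hℓ G hcyc D hD x m hP hx1 hxm hmax hmk i j hij s t hs2 hsmin ht2 ht3 htmax
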